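/- For every n ≥ 1: (i) sup_{y∈X} Σ_{x∈φ⁻ⁿ(y)} ρ_n(x) ≤ Mⁿ; (ii) for every a ∈ C₀(Δ_n) the function Lⁿ(a) : y ↦ Σ_{x∈φ⁻ⁿ(y)} ρ_n(x)a(x) belongs to C₀(X) and satisfies ‖Lⁿ(a)‖_∞ ≤ Mⁿ‖a‖_∞; (iii) Lⁿ satisfies the transfer identity: for every b ∈ C₀(X) and a ∈ C₀(Δ_n), the function (b∘φⁿ)·a (equal to b(φⁿ(x))a(x) on Δ_n and 0 elsewhere) belongs to C₀(Δ_n) and Lⁿ((b∘φⁿ)·a) = b·Lⁿ(a). -/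

import Mathlib

open scoped ZeroAtInfty

noncomputable section

variable {X : Type*} [TopologicalSpace X]

/-- The fibre of `φ : Δ → X` over `y`. -/
def Fiber (Δ : Set X) (φ : X → X) (y : X) : Set X := {x | x ∈ Δ ∧ φ x = y}

/-- `ρ : Δ → [0,∞)` is a potential with bound `M`: it is nonnegative on `Δ`, the sums
`Σ_{x ∈ φ⁻¹(y)} ρ(x)` are (summable and) bounded by `M`, and for every `a ∈ C₀(Δ)` the
function `L(a)(y) = Σ_{x ∈ φ⁻¹(y)} ρ(x) a(x)` belongs to `C₀(X)`. -/
def IsPotential (Δ : Set X) (φ : X → X) (ρ : X → ℝ) (M : ℝ) : Prop :=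
  (∀ x ∈ Δ, 0 ≤ ρ x) ∧
  (∀ y : X, Summable fun x : Fiber Δ φ y => ρ x.1) ∧
  (∀ y : X, (∑' x : Fiber Δ φ y, ρ x.1) ≤ M) ∧
  ∀ a : C₀(X, ℂ), (∀ x ∉ Δ, a x = 0) →
    ∃ b : C₀(X, ℂ), ∀ y : X, b y = ∑' x : Fiber Δ φ y, (ρ x.1 : ℂ) * a x.1

/-- `Δ_pos`: the set of points of `Δ` where `ρ` is strictly positive. -/
def Dpos (Δ : Set X) (ρ : X → ℝ) : Set X := {x | x ∈ Δ ∧ 0 < ρ x}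

/-- `Δ_reg`: the set of points of `Δ_pos` where `ρ` (as a function on `Δ`) is continuous. -/
def Dreg (Δ : Set X) (ρ : X → ℝ) : Set X :=
  {x | x ∈ Δ ∧ 0 < ρ x ∧ ContinuousWithinAt ρ Δ x}

/-- `Δ_n`: the natural domain of `φⁿ`. -/
def Dn (Δ : Set X) (φ : X → X) (n : ℕ) : Set X := {x | ∀ k < n, φ^[k] x ∈ Δ}

/-- `ρ_n(x) = Π_{i=0}^{n-1} ρ(φⁱ(x))`, the cocycle generated by `ρ`. -/
def rhon (φ : X → X) (ρ : X → ℝ) (n : ℕ) (x : X) : ℝ :=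
  ∏ i ∈ Finset.range n, ρ (φ^[i] x)

/-- The fibre of `φⁿ` over `y`. -/
def Fibern (Δ : Set X) (φ : X → X) (n : ℕ) (y : X) : Set X :=
  {x | x ∈ Dn Δ φ n ∧ φ^[n] x = y}

/-!
The fibre of `φⁿ⁺¹` over `y` is the disjoint union, over `z` in the fibre of `φⁿ` over `y`, of the
fibres of `φ` over `z`, and `ρₙ₊₁(x) = ρₙ(φ x) ρ(x)`. Splitting the sums over `φ⁻⁽ⁿ⁺¹⁾(y)`
accordingly gives `Σ ρₙ₊₁ ≤ M · Σ ρₙ` and `Lⁿ⁺¹ = Lⁿ ∘ L`, so (i) and (ii) follow by induction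
on `n`. For (iii), `b ∘ φⁿ` is constant, equal to `b y`, on `φ⁻ⁿ(y)`; and `(b ∘ φⁿ) · a` lies in
`C₀(Δₙ)` because it is continuous on the open set `Δₙ` and dominated by `‖b‖ · |a|`.
-/

open Filter Topology

section Fibres

variable {α : Type*} {Δ : Set α} {φ : α → α}

theorem mem_Dn_succ {n : ℕ} {x : α} : x ∈ Dn Δ φ (n + 1) ↔ x ∈ Δ ∧ φ x ∈ Dn Δ φ n := by
  simp only [Dn, Set.mem_ofPred_eq, Nat.forall_lt_succ_left, Function.iterate_zero_apply,
    Function.iterate_succ_apply]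

theorem Dn_zero : Dn Δ φ 0 = Set.univ := by
  simp [Dn]

theorem Dn_succ (n : ℕ) : Dn Δ φ (n + 1) = Δ ∩ φ ⁻¹' Dn Δ φ n :=
  Set.ext fun _ => mem_Dn_succ

theorem mem_Fibern_succ {n : ℕ} {x y : α} :
    x ∈ Fibern Δ φ (n + 1) y ↔ x ∈ Δ ∧ φ x ∈ Fibern Δ φ n y := by
  simp only [Fibern, Set.mem_ofPred_eq, mem_Dn_succ, Function.iterate_succ_apply, and_assoc]

theorem Fibern_zero (y : α) : Fibern Δ φ 0 y = {y} := by
  ext x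
  simp [Fibern, Dn]

def fibernSuccEquiv (Δ : Set α) (φ : α → α) (n : ℕ) (y : α) :
    (Σ z : Fibern Δ φ n y, Fiber Δ φ z) ≃ Fibern Δ φ (n + 1) y where
  toFun p := ⟨p.2, mem_Fibern_succ.2 ⟨p.2.2.1, by rw [p.2.2.2]; exact p.1.2⟩⟩
  invFun x := ⟨⟨φ x, (mem_Fibern_succ.1 x.2).2⟩, ⟨x, (mem_Fibern_succ.1 x.2).1, rfl⟩⟩
  left_inv := by
    rintro ⟨⟨z, hz⟩, x, hx, hxz⟩
    change φ x = z at hxz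
    subst hxz
    rfl
  right_inv _ := rfl

@[simp]
theorem coe_fibernSuccEquiv {n : ℕ} {y : α} (p : Σ z : Fibern Δ φ n y, Fiber Δ φ z) :
    (fibernSuccEquiv Δ φ n y p : α) = p.2 :=
  rfl

end Fibres

section Cocycle

variable {α : Type*} {Δ : Set α} {φ : α → α} {ρ : α → ℝ} {M : ℝ}

theorem rhon_succ (n : ℕ) (x : α) : rhon φ ρ (n + 1) x = rhon φ ρ n (φ x) * ρ x := by
  simp [rhon, Finset.prod_range_succ', Function.iterate_succ_apply]

theorem rhon_fibernSuccEquiv {n : ℕ} {y : α} (p : Σ z : Fibern Δ φ n y, Fiber Δ φ z) :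
    rhon φ ρ (n + 1) (fibernSuccEquiv Δ φ n y p) = rhon φ ρ n p.1 * ρ p.2 := by
  rw [coe_fibernSuccEquiv, rhon_succ, p.2.2.2]

theorem rhon_nonneg (hρ : ∀ x ∈ Δ, 0 ≤ ρ x) {n : ℕ} {x : α} (hx : x ∈ Dn Δ φ n) :
    0 ≤ rhon φ ρ n x :=
  Finset.prod_nonneg fun i hi => hρ _ (hx i (Finset.mem_range.1 hi))

theorem summable_rhon_and_tsum_le (hρ : ∀ x ∈ Δ, 0 ≤ ρ x)
    (hsum : ∀ y, Summable fun x : Fiber Δ φ y => ρ x) (hbd : ∀ y, ∑' x : Fiber Δ φ y, ρ x ≤ M)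
    (n : ℕ) (y : α) :
    Summable (fun x : Fibern Δ φ n y => rhon φ ρ n x) ∧
      ∑' x : Fibern Δ φ n y, rhon φ ρ n x ≤ M ^ n := by
  induction n with
  | zero =>
    rw [Fibern_zero]
    exact ⟨.of_finite, by simp [rhon]⟩
  | succ n ih =>
    obtain ⟨hsumm, hle⟩ := ih
    have hM : 0 ≤ M := (tsum_nonneg fun x : Fiber Δ φ y => hρ x x.2.1).trans (hbd y)
    have inner_le (z : Fibern Δ φ n y) :
        ∑' x : Fiber Δ φ z, rhon φ ρ n z * ρ x ≤ rhon φ ρ n z * M := by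
      rw [tsum_mul_left]
      exact mul_le_mul_of_nonneg_left (hbd z) (rhon_nonneg hρ z.2.1)
    have inner_summable : Summable fun z : Fibern Δ φ n y =>
        ∑' x : Fiber Δ φ z, rhon φ ρ n z * ρ x :=
      (hsumm.mul_right M).of_nonneg_of_le
        (fun z => tsum_nonneg fun x => mul_nonneg (rhon_nonneg hρ z.2.1) (hρ x x.2.1)) inner_le
    have hS : Summable fun p : Σ z : Fibern Δ φ n y, Fiber Δ φ z => rhon φ ρ n p.1 * ρ p.2 := by
      refine (summable_sigma_of_nonneg fun p => ?_).2 ⟨fun z => ?_, inner_summable⟩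
      · exact mul_nonneg (rhon_nonneg hρ p.1.2.1) (hρ p.2 p.2.2.1)
      · exact (hsum z).mul_left (rhon φ ρ n z)
    refine ⟨(fibernSuccEquiv Δ φ n y).summable_iff.1 (hS.congr fun p => ?_), ?_⟩
    · exact (rhon_fibernSuccEquiv p).symm
    calc ∑' x : Fibern Δ φ (n + 1) y, rhon φ ρ (n + 1) x
        = ∑' p : Σ z : Fibern Δ φ n y, Fiber Δ φ z, rhon φ ρ n p.1 * ρ p.2 := by
          rw [← (fibernSuccEquiv Δ φ n y).tsum_eq]
          exact tsum_congr rhon_fibernSuccEquiv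
      _ = ∑' z : Fibern Δ φ n y, ∑' x : Fiber Δ φ z, rhon φ ρ n z * ρ x := hS.tsum_sigma
      _ ≤ ∑' z : Fibern Δ φ n y, rhon φ ρ n z * M :=
          inner_summable.tsum_le_tsum inner_le (hsumm.mul_right M)
      _ = (∑' z : Fibern Δ φ n y, rhon φ ρ n z) * M := tsum_mul_right
      _ ≤ M ^ n * M := mul_le_mul_of_nonneg_right hle hM
      _ = M ^ (n + 1) := (pow_succ M n).symm

end Cocycle

section Transfer

variable {α : Type*} {Δ : Set α} {φ : α → α} {ρ : α → ℝ} {M : ℝ}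

def transfer (Δ : Set α) (φ : α → α) (ρ : α → ℝ) (f : α → ℂ) (z : α) : ℂ :=
  ∑' x : Fiber Δ φ z, (ρ x : ℂ) * f x

def iterTransfer (Δ : Set α) (φ : α → α) (ρ : α → ℝ) (n : ℕ) (f : α → ℂ) (y : α) : ℂ :=
  ∑' x : Fibern Δ φ n y, (rhon φ ρ n x : ℂ) * f x

theorem norm_rhon_mul_le (hρ : ∀ x ∈ Δ, 0 ≤ ρ x) {n : ℕ} {x : α} (hx : x ∈ Dn Δ φ n)
    {f : α → ℂ} {C : ℝ} (hf : ∀ x, ‖f x‖ ≤ C) :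
    ‖(rhon φ ρ n x : ℂ) * f x‖ ≤ rhon φ ρ n x * C := by
  rw [norm_mul, Complex.norm_real, Real.norm_of_nonneg (rhon_nonneg hρ hx)]
  exact mul_le_mul_of_nonneg_left (hf x) (rhon_nonneg hρ hx)

theorem norm_iterTransfer_le (hρ : ∀ x ∈ Δ, 0 ≤ ρ x) {n : ℕ} {y : α}
    (hrhon : Summable (fun x : Fibern Δ φ n y => rhon φ ρ n x) ∧
      ∑' x : Fibern Δ φ n y, rhon φ ρ n x ≤ M ^ n)
    {f : α → ℂ} {C : ℝ} (hC : 0 ≤ C) (hf : ∀ x, ‖f x‖ ≤ C) :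
    ‖iterTransfer Δ φ ρ n f y‖ ≤ M ^ n * C :=
  calc ‖iterTransfer Δ φ ρ n f y‖
      ≤ ∑' x : Fibern Δ φ n y, rhon φ ρ n x * C :=
        tsum_of_norm_bounded (hrhon.1.mul_right C).hasSum fun x => norm_rhon_mul_le hρ x.2.1 hf
    _ = (∑' x : Fibern Δ φ n y, rhon φ ρ n x) * C := tsum_mul_right
    _ ≤ M ^ n * C := mul_le_mul_of_nonneg_right hrhon.2 hC

theorem iterTransfer_succ (hρ : ∀ x ∈ Δ, 0 ≤ ρ x) {n : ℕ} {y : α}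
    (hrhon : Summable fun x : Fibern Δ φ (n + 1) y => rhon φ ρ (n + 1) x)
    {f : α → ℂ} {C : ℝ} (hf : ∀ x, ‖f x‖ ≤ C) :
    iterTransfer Δ φ ρ (n + 1) f y = iterTransfer Δ φ ρ n (transfer Δ φ ρ f) y := by
  let e := fibernSuccEquiv Δ φ n y
  have hS : Summable fun p => (rhon φ ρ (n + 1) (e p) : ℂ) * f (e p) :=
    e.summable_iff.2 (.of_norm_bounded (hrhon.mul_right C) fun x => norm_rhon_mul_le hρ x.2.1 hf)
  rw [iterTransfer, ← e.tsum_eq, hS.tsum_sigma]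
  refine tsum_congr fun z => ?_
  rw [transfer, ← tsum_mul_left]
  refine tsum_congr fun x => ?_
  rw [rhon_fibernSuccEquiv, coe_fibernSuccEquiv]
  push_cast
  ring

theorem transfer_eq_zero_of_notMem_Dn {n : ℕ} {f : α → ℂ}
    (hf : ∀ x ∉ Dn Δ φ (n + 1), f x = 0) {z : α} (hz : z ∉ Dn Δ φ n) :
    transfer Δ φ ρ f z = 0 := by
  refine (tsum_congr fun x => ?_).trans tsum_zero
  rw [hf x fun hx => hz (x.2.2 ▸ (mem_Dn_succ.1 hx).2), mul_zero]

theorem iterTransfer_indicator_mul (n : ℕ) (b a : α → ℂ) (y : α) :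
    iterTransfer Δ φ ρ n ((Dn Δ φ n).indicator fun x => b (φ^[n] x) * a x) y =
      b y * iterTransfer Δ φ ρ n a y := by
  rw [iterTransfer, iterTransfer, ← tsum_mul_left]
  refine tsum_congr fun x => ?_
  rw [Set.indicator_of_mem x.2.1, x.2.2]
  ring

end Transfer

theorem ZeroAtInftyContinuousMap.norm_apply_le {α β : Type*} [TopologicalSpace α]
    [SeminormedAddCommGroup β] (f : C₀(α, β)) (x : α) : ‖f x‖ ≤ ‖f‖ :=
  norm_toBCF_eq_norm (f := f) ▸ f.toBCF.norm_coe_le_norm x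

theorem exists_zeroAtInfty_eq_indicator_mul {E : Type*} [NormedRing E] {U : Set X}
    (hU : IsOpen U) {g : X → E} (hg : ContinuousOn g U) {C : ℝ} (hgC : ∀ x, ‖g x‖ ≤ C)
    (a : C₀(X, E)) (ha : ∀ x ∉ U, a x = 0) :
    ∃ c : C₀(X, E), ⇑c = U.indicator fun x => g x * a x := by
  set c := U.indicator fun x => g x * a x with hc_def
  have hc_le (x : X) : ‖c x‖ ≤ C * ‖a x‖ := by
    by_cases hx : x ∈ U
    · rw [hc_def, Set.indicator_of_mem hx]
      exact (norm_mul_le _ _).trans (mul_le_mul_of_nonneg_right (hgC x) (norm_nonneg _))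
    · rw [hc_def, Set.indicator_of_notMem hx, ha x hx, norm_zero, mul_zero]
  have tendsto_zero {l : Filter X} (h : Tendsto (fun x => ‖a x‖) l (𝓝 0)) :
      Tendsto c l (𝓝 0) :=
    squeeze_zero_norm hc_le (by simpa using h.const_mul C)
  have hc : Continuous c := continuous_iff_continuousAt.2 fun x => by
    by_cases hx : x ∈ U
    · refine ((hg.mul a.continuous.continuousOn).continuousAt (hU.mem_nhds hx)).congr ?_
      filter_upwards [hU.mem_nhds hx] with z hz using (Set.indicator_of_mem hz _).symm
    · rw [ContinuousAt, hc_def, Set.indicator_of_notMem hx]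
      exact tendsto_zero (by simpa [ha x hx] using a.continuous.norm.tendsto x)
  exact ⟨⟨⟨c, hc⟩, tendsto_zero (by simpa using (zero_at_infty a).norm)⟩, rfl⟩

section Topology

variable {Δ : Set X} {φ : X → X} {ρ : X → ℝ} {M : ℝ}

theorem isOpen_Dn (hΔ : IsOpen Δ) (hφ : ContinuousOn φ Δ) (n : ℕ) : IsOpen (Dn Δ φ n) := by
  induction n with
  | zero => simp [Dn_zero]
  | succ n ih => simpa [Dn_succ] using hφ.isOpen_inter_preimage hΔ ih

theorem continuousOn_iterate_Dn (hφ : ContinuousOn φ Δ) (n : ℕ) :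
    ContinuousOn φ^[n] (Dn Δ φ n) := by
  induction n with
  | zero => exact continuousOn_id
  | succ n ih =>
    rw [Function.iterate_succ, Dn_succ]
    exact ih.comp (hφ.mono Set.inter_subset_left) fun _ hx => hx.2

theorem exists_zeroAtInfty_eq_iterTransfer (hpot : IsPotential Δ φ ρ M) (n : ℕ)
    (a : C₀(X, ℂ)) (ha : ∀ x ∉ Dn Δ φ n, a x = 0) :
    ∃ b : C₀(X, ℂ), ⇑b = iterTransfer Δ φ ρ n a := by
  obtain ⟨hρ, hsum, hbd, htransfer⟩ := hpot
  induction n generalizing a with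
  | zero =>
    refine ⟨a, funext fun y => ?_⟩
    rw [iterTransfer, Fibern_zero]
    simp [rhon]
  | succ n ih =>
    obtain ⟨b₁, hb₁⟩ := htransfer a fun x hx => ha x fun h => hx (mem_Dn_succ.1 h).1
    have hb₁_eq : ⇑b₁ = transfer Δ φ ρ a := funext hb₁
    obtain ⟨b, hb⟩ := ih b₁ fun z hz => hb₁_eq ▸ transfer_eq_zero_of_notMem_Dn ha hz
    refine ⟨b, funext fun y => ?_⟩
    rw [hb, hb₁_eq, iterTransfer_succ hρ (summable_rhon_and_tsum_le hρ hsum hbd (n + 1) y).1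
      a.norm_apply_le]

theorem norm_le_of_eq_iterTransfer (hpot : IsPotential Δ φ ρ M) (n : ℕ) {a b : C₀(X, ℂ)}
    (hb : ⇑b = iterTransfer Δ φ ρ n a) : ‖b‖ ≤ M ^ n * ‖a‖ := by
  rcases isEmpty_or_nonempty X with hX | hX
  · simp [show a = 0 from ZeroAtInftyContinuousMap.ext isEmptyElim,
      show b = 0 from ZeroAtInftyContinuousMap.ext isEmptyElim]
  rw [← ZeroAtInftyContinuousMap.norm_toBCF_eq_norm, BoundedContinuousFunction.norm_le_of_nonempty]
  intro y
  exact hb ▸ norm_iterTransfer_le hpot.1 (summable_rhon_and_tsum_le hpot.1 hpot.2.1 hpot.2.2.1 n y)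
    (norm_nonneg a) a.norm_apply_le

end Topology

theorem iterated_transfer_operator_general
    {X : Type*} [TopologicalSpace X]
    (Δ : Set X) (φ : X → X) (ρ : X → ℝ) (M : ℝ)
    (hΔ : IsOpen Δ) (hφ : ContinuousOn φ Δ)
    (hpot : IsPotential Δ φ ρ M)
    (n : ℕ) :
    -- (i)
    (∀ y : X, Summable (fun x : Fibern Δ φ n y => rhon φ ρ n x.1) ∧
      (∑' x : Fibern Δ φ n y, rhon φ ρ n x.1) ≤ M ^ n) ∧
    -- (ii)
    (∀ a : C₀(X, ℂ), (∀ x ∉ Dn Δ φ n, a x = 0) →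
      ∃ b : C₀(X, ℂ),
        (∀ y : X, b y = ∑' x : Fibern Δ φ n y, (rhon φ ρ n x.1 : ℂ) * a x.1) ∧
        ‖b‖ ≤ M ^ n * ‖a‖) ∧
    -- (iii)
    (∀ b a : C₀(X, ℂ), (∀ x ∉ Dn Δ φ n, a x = 0) →
      ∃ c : C₀(X, ℂ),
        (∀ x ∈ Dn Δ φ n, c x = b (φ^[n] x) * a x) ∧ (∀ x ∉ Dn Δ φ n, c x = 0) ∧
        ∀ y : X, (∑' x : Fibern Δ φ n y, (rhon φ ρ n x.1 : ℂ) * c x.1)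
          = b y * ∑' x : Fibern Δ φ n y, (rhon φ ρ n x.1 : ℂ) * a x.1) := by
  refine ⟨summable_rhon_and_tsum_le hpot.1 hpot.2.1 hpot.2.2.1 n, fun a ha => ?_,
    fun b a ha => ?_⟩
  · obtain ⟨b, hb⟩ := exists_zeroAtInfty_eq_iterTransfer hpot n a ha
    exact ⟨b, congrFun hb, norm_le_of_eq_iterTransfer hpot n hb⟩
  · obtain ⟨c, hc⟩ := exists_zeroAtInfty_eq_indicator_mul (g := fun x => b (φ^[n] x))
      (isOpen_Dn hΔ hφ n) (b.continuous.comp_continuousOn (continuousOn_iterate_Dn hφ n))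
      (fun x => b.norm_apply_le _) a ha
    refine ⟨c, fun x hx => ?_, fun x hx => ?_, fun y => ?_⟩
    · rw [hc, Set.indicator_of_mem hx]
    · rw [hc, Set.indicator_of_notMem hx]
    · exact hc ▸ iterTransfer_indicator_mul n b a y

/-- The iterated transfer operator `Lⁿ` given by the cocycle `ρ_n`:
boundedness by `Mⁿ`, membership of `Lⁿ(a)` in `C₀(X)` with `‖Lⁿ(a)‖ ≤ Mⁿ‖a‖`, and the
transfer identity `Lⁿ((b∘φⁿ)·a) = b·Lⁿ(a)`. -/
theorem iterated_transfer_operator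
    {X : Type*} [TopologicalSpace X] [LocallyCompactSpace X] [T2Space X]
    (Δ : Set X) (φ : X → X) (ρ : X → ℝ) (M : ℝ)
    (hΔ : IsOpen Δ) (hφ : ContinuousOn φ Δ)
    (hcount : ∀ y : X, (Fiber Δ φ y).Countable)
    (hpot : IsPotential Δ φ ρ M)
    (n : ℕ) (hn : 1 ≤ n) :
    -- (i)
    (∀ y : X, Summable (fun x : Fibern Δ φ n y => rhon φ ρ n x.1) ∧
      (∑' x : Fibern Δ φ n y, rhon φ ρ n x.1) ≤ M ^ n) ∧
    -- (ii)
    (∀ a : C₀(X, ℂ), (∀ x ∉ Dn Δ φ n, a x = 0) →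
      ∃ b : C₀(X, ℂ),
        (∀ y : X, b y = ∑' x : Fibern Δ φ n y, (rhon φ ρ n x.1 : ℂ) * a x.1) ∧
        ‖b‖ ≤ M ^ n * ‖a‖) ∧
    -- (iii)
    (∀ b a : C₀(X, ℂ), (∀ x ∉ Dn Δ φ n, a x = 0) →
      ∃ c : C₀(X, ℂ),
        (∀ x ∈ Dn Δ φ n, c x = b (φ^[n] x) * a x) ∧ (∀ x ∉ Dn Δ φ n, c x = 0) ∧
        ∀ y : X, (∑' x : Fibern Δ φ n y, (rhon φ ρ n x.1 : ℂ) * c x.1)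
          = b y * ∑' x : Fibern Δ φ n y, (rhon φ ρ n x.1 : ℂ) * a x.1) :=
  iterated_transfer_operator_general Δ φ ρ M hΔ hφ hpot n
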